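/- arXiv:1808.02712 — 4 statements merged into one kernel-verified Lean document; each statement's English description precedes it below -/
import Mathlib

section
/- Let x_1,...,x_n be nonzero algebraic numbers with degrees d_1,...,d_n over ℚ such that [ℚ(x_1,...,x_n):ℚ] = d_1·d_2···d_n (the non-degenerate condition). If k_1,...,k_n are integers with x_1^{k_1}···x_n^{k_n} = 1, then x_i^{k_i} ∈ ℚ for every i. -/
/-!
The power `y = x i ^ k i` lies in `ℚ(x i)`, and by the relation also in the field `F` generated by
the other `x j`. Since `[ℚ(x) : ℚ] ≤ [ℚ(x i) : ℚ] [F : ℚ] ≤ d i ∏_{j ≠ i} d j`, non-degeneracy forces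
equality in the first step, so `ℚ(x i)` and `F` are linearly disjoint and meet only in `ℚ`.
-/

open IntermediateField Module

namespace IntermediateField

variable {K L : Type*} [Field K] [Field L] [Algebra K L] {ι : Type*}

theorem finrank_adjoin_image_le (x : ι → L) (s : Finset ι) :
    finrank K (adjoin K (x '' s)) ≤ ∏ j ∈ s, finrank K K⟮x j⟯ := by
  classical
  induction s using Finset.induction_on with
  | empty =>
    rw [Finset.coe_empty, Set.image_empty, adjoin_empty, IntermediateField.finrank_bot,
      Finset.prod_empty]
  | insert a s ha ih =>
    rw [Finset.coe_insert, Set.image_insert_eq, ← Set.singleton_union, adjoin_union,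
      Finset.prod_insert ha]
    exact (finrank_sup_le _ _).trans (Nat.mul_le_mul_left _ ih)

theorem linearDisjoint_adjoin_simple_adjoin_image_compl [Fintype ι] {x : ι → L}
    (hx : ∀ j, IsIntegral K (x j))
    (hnd : finrank K (adjoin K (Set.range x)) = ∏ j, finrank K K⟮x j⟯) (i : ι) :
    K⟮x i⟯.LinearDisjoint (adjoin K (x '' {i}ᶜ)) := by
  classical
  have : FiniteDimensional K K⟮x i⟯ := adjoin.finiteDimensional (hx i)
  have : FiniteDimensional K (adjoin K (x '' {i}ᶜ)) :=
    finiteDimensional_adjoin fun _ ⟨j, _, hj⟩ => hj ▸ hx j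
  have hsplit : adjoin K (Set.range x) = K⟮x i⟯ ⊔ adjoin K (x '' {i}ᶜ) := by
    rw [← Set.image_univ, ← Set.union_compl_self {i}, Set.image_union, Set.image_singleton,
      adjoin_union]
  have hprod : ∏ j, finrank K K⟮x j⟯ =
      finrank K K⟮x i⟯ * ∏ j ∈ Finset.univ.erase i, finrank K K⟮x j⟯ :=
    (Finset.mul_prod_erase _ _ (Finset.mem_univ i)).symm
  have hcompl : finrank K (adjoin K (x '' {i}ᶜ)) ≤
      ∏ j ∈ Finset.univ.erase i, finrank K K⟮x j⟯ := by
    have := finrank_adjoin_image_le (K := K) x (Finset.univ.erase i)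
    rwa [Finset.coe_erase, Finset.coe_univ, ← Set.compl_eq_univ_sdiff] at this
  refine LinearDisjoint.of_finrank_sup (le_antisymm (finrank_sup_le _ _) ?_)
  rw [← hsplit, hnd, hprod]
  exact Nat.mul_le_mul_left _ hcompl

theorem zpow_mem_adjoin_image_compl [Fintype ι] {x : ι → L} {k : ι → ℤ}
    (hrel : ∏ j, x j ^ k j = 1) (i : ι) : x i ^ k i ∈ adjoin K (x '' {i}ᶜ) := by
  classical
  rw [← Finset.mul_prod_erase _ _ (Finset.mem_univ i)] at hrel
  rw [eq_inv_of_mul_eq_one_left hrel]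
  exact inv_mem (prod_mem fun j hj =>
    zpow_mem (subset_adjoin K _ (Set.mem_image_of_mem x (Finset.ne_of_mem_erase hj))) _)

theorem zpow_mem_bot_of_prod_zpow_eq_one [Fintype ι] {x : ι → L}
    (hx : ∀ j, IsIntegral K (x j))
    (hnd : finrank K (adjoin K (Set.range x)) = ∏ j, finrank K K⟮x j⟯)
    {k : ι → ℤ} (hrel : ∏ j, x j ^ k j = 1) (i : ι) :
    x i ^ k i ∈ (⊥ : IntermediateField K L) := by
  rw [← (linearDisjoint_adjoin_simple_adjoin_image_compl hx hnd i).inf_eq_bot]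
  exact ⟨zpow_mem (mem_adjoin_simple_self K (x i)) _, zpow_mem_adjoin_image_compl hrel i⟩

end IntermediateField

theorem stmt_6_general {n : ℕ} (x : Fin n → ℂ)
    (hxalg : ∀ i, IsAlgebraic ℚ (x i))
    (hnd : Module.finrank ℚ (IntermediateField.adjoin ℚ (Set.range x)) =
           ∏ i, (minpoly ℚ (x i)).natDegree)
    (k : Fin n → ℤ) (hrel : ∏ i, x i ^ k i = 1) :
    ∀ i, ∃ q : ℚ, x i ^ k i = (q : ℂ) := by
  intro i
  have hint : ∀ j, IsIntegral ℚ (x j) := fun j => (hxalg j).isIntegral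
  simp_rw [← adjoin.finrank (hint _)] at hnd
  obtain ⟨q, hq⟩ := mem_bot.1 (zpow_mem_bot_of_prod_zpow_eq_one hint hnd hrel i)
  exact ⟨q, by rw [← hq, eq_ratCast]⟩

theorem stmt_6 {n : ℕ} (x : Fin n → ℂ)
    (hx0 : ∀ i, x i ≠ 0) (hxalg : ∀ i, IsAlgebraic ℚ (x i))
    (hnd : Module.finrank ℚ (IntermediateField.adjoin ℚ (Set.range x)) =
           ∏ i, (minpoly ℚ (x i)).natDegree)
    (k : Fin n → ℤ) (hrel : ∏ i, x i ^ k i = 1) :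
    ∀ i, ∃ q : ℚ, x i ^ k i = (q : ℂ) :=
  stmt_6_general x hxalg hnd k hrel
end

section
/- Let x_1,...,x_n be nonzero algebraic numbers satisfying the non-degenerate condition [ℚ(x_1,...,x_n):ℚ] = ∏_i deg(x_i), and suppose none of x_1,...,x_n is a root of rational (i.e., no positive integer power of any x_i is rational). Then x_1,...,x_n are multiplicatively independent: ∏ x_i^{k_i} = 1 with k_i ∈ ℤ implies all k_i = 0. -/
/-!
Put `K = ℚ(x₁, …, xₙ)`. An embedding `K → ℂ` is determined by the conjugates it sends the `xᵢ`
to, and there are `[K : ℚ]` embeddings, so the non-degeneracy condition says that every tuple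
of conjugates is realised. Given a relation `∏ xⱼ ^ kⱼ = 1`, move `xᵢ` to an arbitrary conjugate
while fixing the other `xⱼ`: the relation forces every conjugate `y` of `xᵢ` to satisfy
`y ^ kᵢ = xᵢ ^ kᵢ`. Hence `xᵢ ^ kᵢ` is fixed by all embeddings of `K`, so it is rational, and
`kᵢ ≠ 0` would make `xᵢ` a root of rational.
-/

/-- A nonzero algebraic number is a root of rational if some positive
integer power of it is rational. -/
def RootOfRational (a : ℂ) : Prop :=
  ∃ k : ℕ, 0 < k ∧ ∃ q : ℚ, a ^ k = (q : ℂ)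

open Polynomial IntermediateField Function

theorem RootOfRational.of_zpow_eq_ratCast {a : ℂ} {k : ℤ} (hk : k ≠ 0) {q : ℚ}
    (h : a ^ k = q) : RootOfRational a := by
  refine ⟨k.natAbs, Int.natAbs_pos.2 hk, ?_⟩
  rcases Int.natAbs_eq k with hk' | hk'
  · exact ⟨q, by rwa [hk', zpow_natCast] at h⟩
  · refine ⟨q⁻¹, ?_⟩
    rw [hk', zpow_neg, zpow_natCast, inv_eq_iff_eq_inv] at h
    rw [h, Rat.cast_inv]

theorem mem_range_algebraMap_of_forall_algHom_eq {F E A : Type*} [Field F] [Field E] [Field A]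
    [Algebra F E] [Algebra F A] [Algebra.IsSeparable F E]
    [IsAlgClosed A] {b : E} (h : ∀ σ τ : E →ₐ[F] A, σ b = τ b) :
    b ∈ (algebraMap F E).range := by
  rw [← minpoly.natDegree_eq_one_iff]
  have hsub : ((minpoly F b).rootSet A).Subsingleton := by
    rw [← Algebra.IsAlgebraic.range_eval_eq_rootSet_minpoly]
    rintro _ ⟨σ, rfl⟩ _ ⟨τ, rfl⟩
    exact h σ τ
  have hcard := card_rootSet_eq_natDegree (Algebra.IsSeparable.isSeparable F b)
    (IsAlgClosed.splits ((minpoly F b).map (algebraMap F A)))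
  have hle := Fintype.card_le_one_iff_subsingleton.2 hsub.coe_sort
  have hpos := minpoly.natDegree_pos (Algebra.IsIntegral.isIntegral (R := F) b)
  omega

section AdjoinRange

variable {F A ι : Type*} [Field F] [Field A] [Algebra F A] (x : ι → A)

def adjoinRangeGen (i : ι) : adjoin F (Set.range x) :=
  ⟨x i, subset_adjoin F _ (Set.mem_range_self i)⟩

@[simp]
theorem coe_adjoinRangeGen (i : ι) : (adjoinRangeGen (F := F) x i : A) = x i :=
  rfl

theorem minpoly_adjoinRangeGen (i : ι) :
    minpoly F (adjoinRangeGen (F := F) x i) = minpoly F (x i) :=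
  (minpoly.algebraMap_eq (algebraMap (adjoin F (Set.range x)) A).injective _).symm

variable {x}

def algHomAdjoinRangeToRoots (hx : ∀ i, IsIntegral F (x i))
    (σ : adjoin F (Set.range x) →ₐ[F] A) (i : ι) : (minpoly F (x i)).rootSet A :=
  ⟨σ (adjoinRangeGen x i), mem_rootSet.2 ⟨minpoly.ne_zero (hx i), by
    rw [← minpoly_adjoinRangeGen, aeval_algHom_apply, minpoly.aeval, map_zero]⟩⟩

theorem algHomAdjoinRangeToRoots_injective (hx : ∀ i, IsIntegral F (x i)) :
    Injective (algHomAdjoinRangeToRoots hx) := by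
  intro σ τ h
  apply adjoin_algHom_ext F
  rintro _ ⟨i, rfl⟩
  exact congrArg Subtype.val (congrFun h i)

theorem algHomAdjoinRangeToRoots_bijective [Fintype ι] [PerfectField F] [IsAlgClosed A]
    (hx : ∀ i, IsIntegral F (x i))
    (hdeg : Module.finrank F (adjoin F (Set.range x)) = ∏ i, (minpoly F (x i)).natDegree) :
    Bijective (algHomAdjoinRangeToRoots hx) := by
  classical
  have : FiniteDimensional F (adjoin F (Set.range x)) :=
    finiteDimensional_adjoin (by rintro _ ⟨i, rfl⟩; exact hx i)
  refine (Fintype.bijective_iff_injective_and_card _).2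
    ⟨algHomAdjoinRangeToRoots_injective hx, ?_⟩
  rw [AlgHom.card, Fintype.card_pi, hdeg]
  exact Finset.prod_congr rfl fun i _ => (card_rootSet_eq_natDegree
    (PerfectField.separable_of_irreducible (minpoly.irreducible (hx i)))
    (IsAlgClosed.splits _)).symm

theorem exists_algHom_adjoinRangeGen_eq_update [Fintype ι] [PerfectField F] [IsAlgClosed A]
    (hx : ∀ i, IsIntegral F (x i))
    (hdeg : Module.finrank F (adjoin F (Set.range x)) = ∏ i, (minpoly F (x i)).natDegree)
    (σ : adjoin F (Set.range x) →ₐ[F] A) (i : ι) :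
    ∃ τ : adjoin F (Set.range x) →ₐ[F] A, τ (adjoinRangeGen x i) = σ (adjoinRangeGen x i) ∧
      ∀ j ≠ i, τ (adjoinRangeGen x j) = x j := by
  classical
  obtain ⟨τ, hτ⟩ := (algHomAdjoinRangeToRoots_bijective hx hdeg).2 <| update
    (algHomAdjoinRangeToRoots hx (adjoin F (Set.range x)).val) i (algHomAdjoinRangeToRoots hx σ i)
  refine ⟨τ, ?_, fun j hji => ?_⟩
  · simpa [algHomAdjoinRangeToRoots] using congrArg Subtype.val (congrFun hτ i)
  · simpa [algHomAdjoinRangeToRoots, update_of_ne hji] using congrArg Subtype.val (congrFun hτ j)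

theorem algHom_adjoinRangeGen_zpow_eq [Fintype ι] [PerfectField F] [IsAlgClosed A]
    (hx : ∀ i, IsIntegral F (x i))
    (hdeg : Module.finrank F (adjoin F (Set.range x)) = ∏ i, (minpoly F (x i)).natDegree)
    {k : ι → ℤ} (hk : ∏ j, x j ^ k j = 1) (σ : adjoin F (Set.range x) →ₐ[F] A) (i : ι) :
    σ (adjoinRangeGen x i) ^ k i = x i ^ k i := by
  classical
  obtain ⟨τ, hτi, hτj⟩ := exists_algHom_adjoinRangeGen_eq_update hx hdeg σ i
  have hkτ : ∏ j, τ (adjoinRangeGen x j) ^ k j = 1 := by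
    have hkK : ∏ j, adjoinRangeGen x j ^ k j = 1 :=
      (adjoin F (Set.range x)).val.injective (by simpa using hk)
    simpa using congrArg τ hkK
  rw [← Finset.mul_prod_erase _ _ (Finset.mem_univ i)] at hk hkτ
  have hrest : ∏ j ∈ Finset.univ.erase i, τ (adjoinRangeGen x j) ^ k j =
      ∏ j ∈ Finset.univ.erase i, x j ^ k j :=
    Finset.prod_congr rfl fun j hj => by rw [hτj j (Finset.ne_of_mem_erase hj)]
  rw [hrest, hτi] at hkτ
  exact (eq_inv_of_mul_eq_one_left hkτ).trans (eq_inv_of_mul_eq_one_left hk).symm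

end AdjoinRange

theorem stmt_7_general {n : ℕ} (x : Fin n → ℂ)
    (hxalg : ∀ i, IsAlgebraic ℚ (x i))
    (hnd : Module.finrank ℚ (IntermediateField.adjoin ℚ (Set.range x)) =
           ∏ i, (minpoly ℚ (x i)).natDegree)
    (hnr : ∀ i, ¬ RootOfRational (x i)) :
    ∀ k : Fin n → ℤ, ∏ i, x i ^ k i = 1 → ∀ i, k i = 0 := by
  intro k hk i
  by_contra hki
  have hx (j : Fin n) : IsIntegral ℚ (x j) := (hxalg j).isIntegral
  have : FiniteDimensional ℚ (adjoin ℚ (Set.range x)) :=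
    finiteDimensional_adjoin (by rintro _ ⟨j, rfl⟩; exact hx j)
  obtain ⟨q, hq⟩ := mem_range_algebraMap_of_forall_algHom_eq (A := ℂ)
    (b := adjoinRangeGen x i ^ k i) fun σ τ => by
      rw [map_zpow₀, map_zpow₀, algHom_adjoinRangeGen_zpow_eq hx hnd hk,
        algHom_adjoinRangeGen_zpow_eq hx hnd hk]
  refine hnr i (RootOfRational.of_zpow_eq_ratCast hki (q := q) ?_)
  simpa using (map_zpow₀ (adjoin ℚ (Set.range x)).val _ _).symm.trans (congrArg _ hq.symm)

theorem stmt_7 {n : ℕ} (x : Fin n → ℂ)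
    (hx0 : ∀ i, x i ≠ 0) (hxalg : ∀ i, IsAlgebraic ℚ (x i))
    (hnd : Module.finrank ℚ (IntermediateField.adjoin ℚ (Set.range x)) =
           ∏ i, (minpoly ℚ (x i)).natDegree)
    (hnr : ∀ i, ¬ RootOfRational (x i)) :
    ∀ k : Fin n → ℤ, ∏ i, x i ^ k i = 1 → ∀ i, k i = 0 :=
  stmt_7_general x hxalg hnd hnr
end

section
/- Let F be a field, α algebraic over F with E = F(α), [E:F] = d, and suppose α^m ∈ F for some positive integer m. If f(t) is the monic minimal polynomial of α over F, then there exists ζ with ζ^m = 1 such that ζ·α^d = (−1)^d f(0) ∈ F. -/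
/-!
The norm of `α` from `F(α)` to `F` is `(-1)^d f(0)`, and it is multiplicative, so its `m`-th
power is the norm of `α^m ∈ F`, namely `(α^m)^d`. Hence `(-1)^d f(0) / α^d` is an `m`-th root
of unity.
-/

open Polynomial IntermediateField

theorem PowerBasis.coeff_zero_minpoly_pow_eq_of_gen_pow_eq {R S : Type*} [CommRing R] [Ring S]
    [Algebra R S] (pb : PowerBasis R S) {m : ℕ} {a : R} (h : pb.gen ^ m = algebraMap R S a) :
    ((-1) ^ pb.dim * (minpoly R pb.gen).coeff 0) ^ m = a ^ pb.dim := by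
  rw [← Algebra.PowerBasis.norm_gen_eq_coeff_zero_minpoly, ← map_pow, h,
    Algebra.norm_algebraMap_of_basis pb.basis, Fintype.card_fin]

theorem IsIntegral.coeff_zero_minpoly_pow_eq_of_pow_eq {F Ω : Type*} [Field F] [Field Ω]
    [Algebra F Ω] {α : Ω} (hint : IsIntegral F α) {m : ℕ} {a : F}
    (h : α ^ m = algebraMap F Ω a) :
    ((-1) ^ (minpoly F α).natDegree * (minpoly F α).coeff 0) ^ m =
      a ^ (minpoly F α).natDegree := by
  have hgen : (adjoin.powerBasis hint).gen ^ m = algebraMap F F⟮α⟯ a :=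
    Subtype.ext (by simpa using h)
  simpa [minpoly_gen] using
    (adjoin.powerBasis hint).coeff_zero_minpoly_pow_eq_of_gen_pow_eq hgen

theorem stmt_12_general (F Ω : Type*) [Field F] [Field Ω] [Algebra F Ω]
    (α : Ω) (hα : α ≠ 0) (hint : IsIntegral F α)
    (m : ℕ) (hpow : α ^ m ∈ (algebraMap F Ω).range)
    (d : ℕ) (hd : d = (minpoly F α).natDegree) :
    ∃ ζ : Ω, ζ ^ m = 1 ∧
      ζ * α ^ d = algebraMap F Ω ((-1) ^ d * (minpoly F α).coeff 0) := by
  obtain ⟨a, ha⟩ := hpow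
  have key := hint.coeff_zero_minpoly_pow_eq_of_pow_eq ha.symm
  rw [← hd] at key
  have hαd : α ^ d ≠ 0 := pow_ne_zero d hα
  refine ⟨algebraMap F Ω ((-1) ^ d * (minpoly F α).coeff 0) / α ^ d, ?_,
    div_mul_cancel₀ _ hαd⟩
  rw [div_pow, ← map_pow, key, map_pow, ha, ← pow_mul, ← pow_mul, mul_comm,
    div_self (pow_ne_zero _ hα)]

theorem stmt_12 (F Ω : Type*) [Field F] [Field Ω] [Algebra F Ω]
    (α : Ω) (hα : α ≠ 0) (hint : IsIntegral F α)
    (m : ℕ) (hm : 0 < m) (hpow : α ^ m ∈ (algebraMap F Ω).range)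
    (d : ℕ) (hd : d = (minpoly F α).natDegree) :
    ∃ ζ : Ω, ζ ^ m = 1 ∧
      ζ * α ^ d = algebraMap F Ω ((-1) ^ d * (minpoly F α).coeff 0) :=
  stmt_12_general F Ω α hα hint m hpow d hd
end

section
/- Let a be a nonzero algebraic number with minimal polynomial p whose complex roots are z_1,...,z_d. If z_i/z_j is a root of unity for some i ≠ j, then a is degree reducible: there exists an integer m ≥ 1 with deg(a^m) < deg(a). -/
/-!
If `deg (a ^ k) = deg a` then `ℚ(a ^ k) = ℚ(a)`, so `a = f (a ^ k)` for some `f ∈ ℚ[X]`. The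
minimal polynomial of `a` then divides `f (X ^ k) - X`, so every conjugate `z` satisfies
`z = f (z ^ k)`; two conjugates with equal `k`-th powers, such as `zi` and `zj` when `zi / zj` is
a `k`-th root of unity, must therefore coincide.
-/

open IntermediateField Polynomial

variable {K L : Type*} [Field K] [Field L] [Algebra K L]

theorem exists_aeval_pow_eq_of_natDegree_minpoly_le {x : L} (hx : IsIntegral K x) (k : ℕ)
    (h : (minpoly K x).natDegree ≤ (minpoly K (x ^ k)).natDegree) :
    ∃ f : K[X], aeval (x ^ k) f = x := by
  have hxk : IsIntegral K (x ^ k) := hx.pow k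
  have : FiniteDimensional K K⟮x⟯ := adjoin.finiteDimensional hx
  have hle : K⟮x ^ k⟯ ≤ K⟮x⟯ := adjoin_simple_le_iff.mpr (pow_mem (mem_adjoin_simple_self K x) k)
  have heq : K⟮x ^ k⟯ = K⟮x⟯ :=
    eq_of_le_of_finrank_le hle (by rwa [adjoin.finrank hx, adjoin.finrank hxk])
  have hmem : x ∈ K⟮x ^ k⟯.toSubalgebra := heq ▸ mem_adjoin_simple_self K x
  rw [adjoin_simple_toSubalgebra_of_isAlgebraic hxk.isAlgebraic,
    Algebra.adjoin_singleton_eq_range_aeval] at hmem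
  exact hmem

theorem eq_of_pow_eq_of_aeval_minpoly_eq_zero {M : Type*} [CommRing M] [Algebra K M] {x : L}
    {k : ℕ} {f : K[X]} (hf : aeval (x ^ k) f = x) {y z : M} (hy : aeval y (minpoly K x) = 0)
    (hz : aeval z (minpoly K x) = 0) (hyz : y ^ k = z ^ k) : y = z := by
  have hdvd : minpoly K x ∣ f.comp (X ^ k) - X := minpoly.dvd K x (by simp [aeval_comp, hf])
  have key {w : M} (hw : aeval w (minpoly K x) = 0) : w = aeval (w ^ k) f := by
    have := aeval_eq_zero_of_dvd_aeval_eq_zero hdvd hw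
    rw [map_sub, aeval_comp, aeval_X, aeval_X_pow, sub_eq_zero] at this
    exact this.symm
  rw [key hy, key hz, hyz]

theorem natDegree_minpoly_pow_lt_of_pow_eq {M : Type*} [CommRing M] [Algebra K M] {x : L}
    (hx : IsIntegral K x) {y z : M} (hy : aeval y (minpoly K x) = 0)
    (hz : aeval z (minpoly K x) = 0) (hne : y ≠ z) {k : ℕ} (hyz : y ^ k = z ^ k) :
    (minpoly K (x ^ k)).natDegree < (minpoly K x).natDegree := by
  by_contra! h
  obtain ⟨f, hf⟩ := exists_aeval_pow_eq_of_natDegree_minpoly_le hx k h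
  exact hne (eq_of_pow_eq_of_aeval_minpoly_eq_zero hf hy hz hyz)

theorem stmt_15_general (a : ℂ)
    (zi zj : ℂ) (hzi : zi ∈ (minpoly ℚ a).rootSet ℂ)
    (hzj : zj ∈ (minpoly ℚ a).rootSet ℂ) (hne : zi ≠ zj)
    (hroot : ∃ k : ℕ, 0 < k ∧ (zi / zj) ^ k = 1) :
    ∃ m : ℕ, 1 ≤ m ∧ (minpoly ℚ (a ^ m)).natDegree < (minpoly ℚ a).natDegree := by
  obtain ⟨k, hk, hpow⟩ := hroot
  rw [mem_rootSet] at hzi hzj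
  have hzj0 : zj ≠ 0 := by
    rintro rfl
    simp [hk.ne'] at hpow
  rw [div_pow, div_eq_one_iff_eq (pow_ne_zero k hzj0)] at hpow
  exact ⟨k, hk, natDegree_minpoly_pow_lt_of_pow_eq (minpoly.ne_zero_iff.mp hzi.1) hzi.2 hzj.2
    hne hpow⟩

theorem stmt_15 (a : ℂ) (ha : a ≠ 0) (halg : IsAlgebraic ℚ a)
    (zi zj : ℂ) (hzi : zi ∈ (minpoly ℚ a).rootSet ℂ)
    (hzj : zj ∈ (minpoly ℚ a).rootSet ℂ) (hne : zi ≠ zj)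
    (hroot : ∃ k : ℕ, 0 < k ∧ (zi / zj) ^ k = 1) :
    ∃ m : ℕ, 1 ≤ m ∧ (minpoly ℚ (a ^ m)).natDegree < (minpoly ℚ a).natDegree :=
  stmt_15_general a zi zj hzi hzj hne hroot
end
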